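/- arXiv:1803.04633 — 7 statements merged into one kernel-verified Lean document; each statement's English description precedes it below -/
import Mathlib

section
/- Let a ≤ b ≤ c be reals, let λ₁, λ₂, λ₃ ≥ 0 with λ₁ + λ₂ + λ₃ = 1, z₁, z₂ ∈ {0,1} with z₁ + z₂ = 1, z₁ ≥ λ₁, z₂ ≥ λ₃, and let x = λ₁a + λ₂b + λ₃c and w be any real with x² ≤ w ≤ λ₁a² + λ₂b² + λ₃c². If x = b (the variable sits at the interior discretization point), then w = b²; i.e., the piecewise quadratic relaxation is exact at the breakpoints. -/
/-!
The adjacency constraints force `λ₁ = 0` or `λ₃ = 0`, so `x` is a combination of `b` and one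
neighbouring point `q`. Then `x = b` means the weight of `q` kills `q - b`, hence also
`q² - b² = (q - b)(q + b)`, so the secant upper bound collapses to `b²` and squeezes `w`
against the lower bound `x² = b²`.
-/

theorem mul_add_mul_sq_eq_sq_of_mul_add_mul_eq {R : Type*} [CommRing R] {μ ν p q : R}
    (hsum : μ + ν = 1) (h : μ * p + ν * q = p) : μ * p ^ 2 + ν * q ^ 2 = p ^ 2 := by
  have hν : ν * (q - p) = 0 := by linear_combination h - p * hsum
  linear_combination (q + p) * hν + p ^ 2 * hsum

theorem outer_weight_eq_zero_of_adjacency {l1 l3 z1 z2 : ℝ}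
    (hl1 : 0 ≤ l1) (hl3 : 0 ≤ l3) (hz1 : z1 = 0 ∨ z1 = 1) (hzsum : z1 + z2 = 1)
    (hadj1 : l1 ≤ z1) (hadj3 : l3 ≤ z2) : l1 = 0 ∨ l3 = 0 := by
  rcases hz1 with rfl | rfl
  · exact Or.inl (le_antisymm hadj1 hl1)
  · exact Or.inr (le_antisymm (by linarith) hl3)

theorem weighted_sq_eq_sq_of_outer_weight_eq_zero {l1 l2 l3 a b c : ℝ}
    (hsum : l1 + l2 + l3 = 1) (hx : l1 * a + l2 * b + l3 * c = b) (hl : l1 = 0 ∨ l3 = 0) :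
    l1 * a ^ 2 + l2 * b ^ 2 + l3 * c ^ 2 = b ^ 2 := by
  rcases hl with rfl | rfl
  · have := mul_add_mul_sq_eq_sq_of_mul_add_mul_eq (μ := l2) (ν := l3) (p := b) (q := c)
      (by linarith) (by linarith)
    linarith
  · have := mul_add_mul_sq_eq_sq_of_mul_add_mul_eq (μ := l2) (ν := l1) (p := b) (q := a)
      (by linarith) (by linarith)
    linarith

theorem piecewise_quadratic_exact_at_breakpoint_general
    (a b c l1 l2 l3 z1 z2 x w : ℝ)
    (hl1 : 0 ≤ l1) (hl3 : 0 ≤ l3)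
    (hsum : l1 + l2 + l3 = 1)
    (hz1 : z1 = 0 ∨ z1 = 1)
    (hzsum : z1 + z2 = 1)
    (hadj1 : l1 ≤ z1) (hadj3 : l3 ≤ z2)
    (hx : x = l1 * a + l2 * b + l3 * c)
    (hw1 : x ^ 2 ≤ w) (hw2 : w ≤ l1 * a ^ 2 + l2 * b ^ 2 + l3 * c ^ 2)
    (hxb : x = b) :
    w = b ^ 2 := by
  have hl := outer_weight_eq_zero_of_adjacency hl1 hl3 hz1 hzsum hadj1 hadj3
  have hsecant := weighted_sq_eq_sq_of_outer_weight_eq_zero hsum (hx ▸ hxb) hl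
  subst hxb
  linarith

/-- The piecewise quadratic relaxation is exact at the breakpoints: if the
represented variable sits at the interior discretization point `b`, then
`w = b²`. -/
theorem piecewise_quadratic_exact_at_breakpoint
    (a b c l1 l2 l3 z1 z2 x w : ℝ)
    (hab : a ≤ b) (hbc : b ≤ c)
    (hl1 : 0 ≤ l1) (hl2 : 0 ≤ l2) (hl3 : 0 ≤ l3)
    (hsum : l1 + l2 + l3 = 1)
    (hz1 : z1 = 0 ∨ z1 = 1) (hz2 : z2 = 0 ∨ z2 = 1)
    (hzsum : z1 + z2 = 1)
    (hadj1 : l1 ≤ z1) (hadj3 : l3 ≤ z2)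
    (hx : x = l1 * a + l2 * b + l3 * c)
    (hw1 : x ^ 2 ≤ w) (hw2 : w ≤ l1 * a ^ 2 + l2 * b ^ 2 + l3 * c ^ 2)
    (hxb : x = b) :
    w = b ^ 2 :=
  piecewise_quadratic_exact_at_breakpoint_general a b c l1 l2 l3 z1 z2 x w hl1 hl3 hsum hz1 hzsum
    hadj1 hadj3 hx hw1 hw2 hxb
end

section
/- Let a ≤ b ≤ c be reals and let (x, w) ∈ ℝ² satisfy either (a ≤ x ≤ b and x² ≤ w ≤ (a + b)x − ab) or (b ≤ x ≤ c and x² ≤ w ≤ (b + c)x − bc). Then there exist λ₁, λ₂, λ₃ ≥ 0 with λ₁ + λ₂ + λ₃ = 1 and z₁, z₂ ∈ {0,1} with z₁ + z₂ = 1, z₁ ≥ λ₁, z₂ ≥ λ₃, such that x = λ₁a + λ₂b + λ₃c and x² ≤ w ≤ λ₁a² + λ₂b² + λ₃c²; i.e., the piecewise quadratic λ-formulation exactly represents the union of the two secant-bounded convex quadratic regions. -/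
/-!
A point `x ∈ [a, b]` is a convex combination `s a + t b`, and along the segment the secant
`(a + b) x - a b` is exactly the interpolant `s a² + t b²`. So a point of the first region is
represented with `λ = (s, t, 0)`, `z = (1, 0)`, and a point of the second with
`λ = (0, s, t)`, `z = (0, 1)`.
-/

open Set

theorem secant_convexCombination {R : Type*} [CommRing R] {s t : R} (hst : s + t = 1) (a b : R) :
    (a + b) * (s * a + t * b) - a * b = s * a ^ 2 + t * b ^ 2 := by
  linear_combination a * b * hst

theorem exists_secant_weights {𝕜 : Type*} [Field 𝕜] [LinearOrder 𝕜] [IsStrictOrderedRing 𝕜]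
    {a b x : 𝕜} (hx : x ∈ Icc a b) :
    ∃ s t : 𝕜, 0 ≤ s ∧ 0 ≤ t ∧ s + t = 1 ∧ x = s * a + t * b ∧
      s * a ^ 2 + t * b ^ 2 = (a + b) * x - a * b := by
  obtain ⟨s, t, hs, ht, hst, rfl⟩ := Icc_subset_segment hx
  exact ⟨s, t, hs, ht, hst, rfl, (secant_convexCombination hst a b).symm⟩

theorem union_in_piecewise_quadratic_general
    (a b c x w : ℝ)
    (h : (a ≤ x ∧ x ≤ b ∧ x ^ 2 ≤ w ∧ w ≤ (a + b) * x - a * b) ∨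
         (b ≤ x ∧ x ≤ c ∧ x ^ 2 ≤ w ∧ w ≤ (b + c) * x - b * c)) :
    ∃ l1 l2 l3 z1 z2 : ℝ,
      0 ≤ l1 ∧ 0 ≤ l2 ∧ 0 ≤ l3 ∧ l1 + l2 + l3 = 1 ∧
      (z1 = 0 ∨ z1 = 1) ∧ (z2 = 0 ∨ z2 = 1) ∧ z1 + z2 = 1 ∧
      l1 ≤ z1 ∧ l3 ≤ z2 ∧
      x = l1 * a + l2 * b + l3 * c ∧
      x ^ 2 ≤ w ∧ w ≤ l1 * a ^ 2 + l2 * b ^ 2 + l3 * c ^ 2 := by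
  rcases h with ⟨hax, hxb, hlow, hup⟩ | ⟨hbx, hxc, hlow, hup⟩
  · obtain ⟨s, t, hs, ht, hst, hx, hsec⟩ := exists_secant_weights ⟨hax, hxb⟩
    exact ⟨s, t, 0, 1, 0, hs, ht, le_rfl, by linarith, .inr rfl, .inl rfl, by norm_num,
      by linarith, le_rfl, by rw [hx]; ring, hlow, by linarith⟩
  · obtain ⟨s, t, hs, ht, hst, hx, hsec⟩ := exists_secant_weights ⟨hbx, hxc⟩
    exact ⟨0, s, t, 0, 1, le_rfl, hs, ht, by linarith, .inl rfl, .inr rfl, by norm_num,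
      le_rfl, by linarith, by rw [hx]; ring, hlow, by linarith⟩

/-- The piecewise quadratic λ-formulation exactly represents the union of the
two secant-bounded convex quadratic regions: every point of the union is
feasible. -/
theorem union_in_piecewise_quadratic
    (a b c x w : ℝ) (hab : a ≤ b) (hbc : b ≤ c)
    (h : (a ≤ x ∧ x ≤ b ∧ x ^ 2 ≤ w ∧ w ≤ (a + b) * x - a * b) ∨
         (b ≤ x ∧ x ≤ c ∧ x ^ 2 ≤ w ∧ w ≤ (b + c) * x - b * c)) :
    ∃ l1 l2 l3 z1 z2 : ℝ,
      0 ≤ l1 ∧ 0 ≤ l2 ∧ 0 ≤ l3 ∧ l1 + l2 + l3 = 1 ∧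
      (z1 = 0 ∨ z1 = 1) ∧ (z2 = 0 ∨ z2 = 1) ∧ z1 + z2 = 1 ∧
      l1 ≤ z1 ∧ l3 ≤ z2 ∧
      x = l1 * a + l2 * b + l3 * c ∧
      x ^ 2 ≤ w ∧ w ≤ l1 * a ^ 2 + l2 * b ^ 2 + l3 * c ^ 2 :=
  union_in_piecewise_quadratic_general a b c x w h
end

section
/- Let a ≤ b ≤ c, let λ₁, λ₂, λ₃ ≥ 0 with λ₁ + λ₂ + λ₃ = 1, z₁, z₂ ∈ {0,1} with z₁ + z₂ = 1, z₁ ≥ λ₁, z₂ ≥ λ₃, and set x = λ₁a + λ₂b + λ₃c. Then for any real w with x² ≤ w ≤ λ₁a² + λ₂b² + λ₃c², the relaxation gap satisfies w − x² ≤ max((b − a)², (c − b)²)/4. -/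
/-!
Each admissible value of `z` forces one outer multiplier to vanish (`l₁ ≤ z₁`, `l₃ ≤ z₂`), so `x`
is a convex combination of the two endpoints of a single partition. On a segment `[p, q]` with
weights `s + t = 1`, the gap between the secant and the parabola is `s t (q - p)²`, and
`s t ≤ ((s + t) / 2)² = 1/4`.
-/

namespace PiecewiseQuadratic

theorem mul_le_one_fourth_of_add_eq_one {s t : ℝ} (h : s + t = 1) : s * t ≤ 1 / 4 := by
  nlinarith [sq_nonneg (s - t)]

theorem secant_sub_sq_eq {s t : ℝ} (h : s + t = 1) (p q : ℝ) :
    s * p ^ 2 + t * q ^ 2 - (s * p + t * q) ^ 2 = s * t * (q - p) ^ 2 := by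
  obtain rfl : t = 1 - s := by linarith
  ring

theorem secant_sub_sq_le {s t : ℝ} (h : s + t = 1) (p q : ℝ) :
    s * p ^ 2 + t * q ^ 2 - (s * p + t * q) ^ 2 ≤ (q - p) ^ 2 / 4 :=
  calc s * p ^ 2 + t * q ^ 2 - (s * p + t * q) ^ 2 = s * t * (q - p) ^ 2 := secant_sub_sq_eq h p q
    _ ≤ 1 / 4 * (q - p) ^ 2 :=
        mul_le_mul_of_nonneg_right (mul_le_one_fourth_of_add_eq_one h) (sq_nonneg _)
    _ = (q - p) ^ 2 / 4 := by ring

end PiecewiseQuadratic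

open PiecewiseQuadratic in
theorem piecewise_quadratic_gap_bound_general
    (a b c l1 l2 l3 z1 z2 x w : ℝ)
    (hl1 : 0 ≤ l1) (hl3 : 0 ≤ l3)
    (hsum : l1 + l2 + l3 = 1)
    (hz1 : z1 = 0 ∨ z1 = 1)
    (hzsum : z1 + z2 = 1)
    (hadj1 : l1 ≤ z1) (hadj3 : l3 ≤ z2)
    (hx : x = l1 * a + l2 * b + l3 * c)
    (hw2 : w ≤ l1 * a ^ 2 + l2 * b ^ 2 + l3 * c ^ 2) :
    w - x ^ 2 ≤ max ((b - a) ^ 2) ((c - b) ^ 2) / 4 := by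
  subst hx
  rcases hz1 with rfl | rfl
  · obtain rfl : l1 = 0 := le_antisymm hadj1 hl1
    have hgap := secant_sub_sq_le (s := l2) (t := l3) (by linarith) b c
    have hmax := le_max_right ((b - a) ^ 2) ((c - b) ^ 2)
    linarith
  · obtain rfl : l3 = 0 := le_antisymm (by linarith) hl3
    have hgap := secant_sub_sq_le (s := l1) (t := l2) (by linarith) a b
    have hmax := le_max_left ((b - a) ^ 2) ((c - b) ^ 2)
    linarith

/-- The relaxation gap of the piecewise quadratic λ-formulation is at most
`max((b - a)², (c - b)²) / 4`. -/
theorem piecewise_quadratic_gap_bound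
    (a b c l1 l2 l3 z1 z2 x w : ℝ)
    (hab : a ≤ b) (hbc : b ≤ c)
    (hl1 : 0 ≤ l1) (hl2 : 0 ≤ l2) (hl3 : 0 ≤ l3)
    (hsum : l1 + l2 + l3 = 1)
    (hz1 : z1 = 0 ∨ z1 = 1) (hz2 : z2 = 0 ∨ z2 = 1)
    (hzsum : z1 + z2 = 1)
    (hadj1 : l1 ≤ z1) (hadj3 : l3 ≤ z2)
    (hx : x = l1 * a + l2 * b + l3 * c)
    (hw1 : x ^ 2 ≤ w) (hw2 : w ≤ l1 * a ^ 2 + l2 * b ^ 2 + l3 * c ^ 2) :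
    w - x ^ 2 ≤ max ((b - a) ^ 2) ((c - b) ^ 2) / 4 :=
  piecewise_quadratic_gap_bound_general a b c l1 l2 l3 z1 z2 x w hl1 hl3 hsum hz1 hzsum hadj1 hadj3
    hx hw2
end

section
/- Let l₁ ≤ u₁, l₂ ≤ u₂, l₃ ≤ u₃ be reals and let x₁ ∈ [l₁, u₁], x₂ ∈ [l₂, u₂], x₃ ∈ [l₃, u₃]. Then the lifted point (x₁, x₂, x₃, x₁x₂x₃) ∈ ℝ⁴ lies in the convex hull of the eight lifted vertex points {(v₁, v₂, v₃, v₁v₂v₃) : v₁ ∈ {l₁, u₁}, v₂ ∈ {l₂, u₂}, v₃ ∈ {l₃, u₃}}; i.e., the extreme-point (λ) representation of the convex hull relaxation of a trilinear term is valid on a box. -/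
/-!
The lifted point `(x₁, x₂, x₃, x₁x₂x₃)` is affine in each `xᵢ` separately. Moving one coordinate
at a time from a vertex value `lᵢ` or `uᵢ` to `xᵢ` therefore stays on a segment between points
already known to lie in the convex hull, and three such steps reach the lifted point.
-/

open AffineMap Set

theorem Convex.apply_mem_of_mem_Icc {E : Type*} [AddCommGroup E] [Module ℝ E] {s : Set E}
    (hs : Convex ℝ s) (f : ℝ → E) {l u x : ℝ}
    (hf : ∀ t : ℝ, f (lineMap l u t) = lineMap (f l) (f u) t)
    (hl : f l ∈ s) (hu : f u ∈ s) (hx : x ∈ Icc l u) : f x ∈ s := by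
  obtain ⟨t, ht, rfl⟩ : x ∈ lineMap l u '' Icc (0 : ℝ) 1 :=
    segment_eq_image_lineMap ℝ l u ▸ Icc_subset_segment hx
  refine hf t ▸ hs.segment_subset hl hu ?_
  rw [segment_eq_image_lineMap]
  exact mem_image_of_mem _ ht

def trilinearLift (x y z : ℝ) : Fin 4 → ℝ := ![x, y, z, x * y * z]

theorem trilinearLift_lineMap_left (a b y z t : ℝ) :
    trilinearLift (lineMap a b t) y z = lineMap (trilinearLift a y z) (trilinearLift b y z) t := by
  ext i
  fin_cases i <;> simp [trilinearLift, lineMap_apply_module] <;> ring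

theorem trilinearLift_lineMap_middle (x a b z t : ℝ) :
    trilinearLift x (lineMap a b t) z = lineMap (trilinearLift x a z) (trilinearLift x b z) t := by
  ext i
  fin_cases i <;> simp [trilinearLift, lineMap_apply_module] <;> ring

theorem trilinearLift_lineMap_right (x y a b t : ℝ) :
    trilinearLift x y (lineMap a b t) = lineMap (trilinearLift x y a) (trilinearLift x y b) t := by
  ext i
  fin_cases i <;> simp [trilinearLift, lineMap_apply_module] <;> ring

theorem trilinear_extreme_point_representation_general
    (l₁ u₁ l₂ u₂ l₃ u₃ x₁ x₂ x₃ : ℝ)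
    (hx₁ : x₁ ∈ Set.Icc l₁ u₁) (hx₂ : x₂ ∈ Set.Icc l₂ u₂)
    (hx₃ : x₃ ∈ Set.Icc l₃ u₃) :
    (![x₁, x₂, x₃, x₁ * x₂ * x₃] : Fin 4 → ℝ) ∈
      convexHull ℝ {p : Fin 4 → ℝ | ∃ v₁ v₂ v₃ : ℝ,
        (v₁ = l₁ ∨ v₁ = u₁) ∧ (v₂ = l₂ ∨ v₂ = u₂) ∧ (v₃ = l₃ ∨ v₃ = u₃) ∧
        p = ![v₁, v₂, v₃, v₁ * v₂ * v₃]} := by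
  set V : Set (Fin 4 → ℝ) := {p | ∃ v₁ v₂ v₃ : ℝ,
    (v₁ = l₁ ∨ v₁ = u₁) ∧ (v₂ = l₂ ∨ v₂ = u₂) ∧ (v₃ = l₃ ∨ v₃ = u₃) ∧
    p = ![v₁, v₂, v₃, v₁ * v₂ * v₃]}
  have hV : Convex ℝ (convexHull ℝ V) := convex_convexHull ℝ V
  have third : ∀ v₁ v₂, (v₁ = l₁ ∨ v₁ = u₁) → (v₂ = l₂ ∨ v₂ = u₂) →
      trilinearLift v₁ v₂ x₃ ∈ convexHull ℝ V := fun v₁ v₂ h₁ h₂ =>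
    hV.apply_mem_of_mem_Icc (trilinearLift v₁ v₂ ·) (trilinearLift_lineMap_right v₁ v₂ l₃ u₃)
      (subset_convexHull ℝ V ⟨v₁, v₂, l₃, h₁, h₂, .inl rfl, rfl⟩)
      (subset_convexHull ℝ V ⟨v₁, v₂, u₃, h₁, h₂, .inr rfl, rfl⟩) hx₃
  have second : ∀ v₁, (v₁ = l₁ ∨ v₁ = u₁) → trilinearLift v₁ x₂ x₃ ∈ convexHull ℝ V :=
    fun v₁ h₁ => hV.apply_mem_of_mem_Icc (trilinearLift v₁ · x₃)
      (trilinearLift_lineMap_middle v₁ l₂ u₂ x₃)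
      (third v₁ l₂ h₁ (.inl rfl)) (third v₁ u₂ h₁ (.inr rfl)) hx₂
  exact hV.apply_mem_of_mem_Icc (trilinearLift · x₂ x₃) (trilinearLift_lineMap_left l₁ u₁ x₂ x₃)
    (second l₁ (.inl rfl)) (second u₁ (.inr rfl)) hx₁

/-- The lifted point `(x₁, x₂, x₃, x₁x₂x₃)` of a trilinear term on a box lies
in the convex hull of the eight lifted vertices of the box. -/
theorem trilinear_extreme_point_representation
    (l₁ u₁ l₂ u₂ l₃ u₃ x₁ x₂ x₃ : ℝ)
    (h₁ : l₁ ≤ u₁) (h₂ : l₂ ≤ u₂) (h₃ : l₃ ≤ u₃)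
    (hx₁ : x₁ ∈ Set.Icc l₁ u₁) (hx₂ : x₂ ∈ Set.Icc l₂ u₂)
    (hx₃ : x₃ ∈ Set.Icc l₃ u₃) :
    (![x₁, x₂, x₃, x₁ * x₂ * x₃] : Fin 4 → ℝ) ∈
      convexHull ℝ {p : Fin 4 → ℝ | ∃ v₁ v₂ v₃ : ℝ,
        (v₁ = l₁ ∨ v₁ = u₁) ∧ (v₂ = l₂ ∨ v₂ = u₂) ∧ (v₃ = l₃ ∨ v₃ = u₃) ∧
        p = ![v₁, v₂, v₃, v₁ * v₂ * v₃]} :=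
  trilinear_extreme_point_representation_general l₁ u₁ l₂ u₂ l₃ u₃ x₁ x₂ x₃ hx₁ hx₂ hx₃
end

section
/- Let lx ≤ ux and ly ≤ uy be reals and let x ∈ [lx, ux], y ∈ [ly, uy]. Then (x, y, xy) ∈ ℝ³ lies in the convex hull of the four lifted vertex points {(vx, vy, vx·vy) : vx ∈ {lx, ux}, vy ∈ {ly, uy}}; i.e., the extreme-point representation of the convex hull (McCormick) relaxation of a bilinear term is valid on a box. -/
/-! The lifted map `(x, y) ↦ (x, y, xy)` is affine in each variable separately. Moving `x` to
an endpoint of `[lx, ux]` with `y` fixed writes `(x, y, xy)` as a convex combination of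
`(lx, y, lx y)` and `(ux, y, ux y)`; moving `y` in each of these writes them as convex
combinations of two lifted vertices. -/

open Set

section

variable {𝕜 : Type*} [CommRing 𝕜]

lemma lift_eq_lineMap_left (x y : 𝕜) :
    (![x, y, x * y] : Fin 3 → 𝕜) = AffineMap.lineMap (k := 𝕜) ![0, y, 0] ![1, y, y] x := by
  ext i
  fin_cases i <;> simp [AffineMap.lineMap_apply_module]
  ring

lemma lift_eq_lineMap_right (x y : 𝕜) :
    (![x, y, x * y] : Fin 3 → 𝕜) = AffineMap.lineMap (k := 𝕜) ![x, 0, 0] ![x, 1, x] y := by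
  ext i
  fin_cases i <;> simp [AffineMap.lineMap_apply_module] <;> ring

lemma lift_mem_segment_left [PartialOrder 𝕜] [IsOrderedRing 𝕜] {a b x : 𝕜}
    (hx : x ∈ segment 𝕜 a b) (y : 𝕜) :
    (![x, y, x * y] : Fin 3 → 𝕜) ∈ segment 𝕜 ![a, y, a * y] ![b, y, b * y] := by
  rw [lift_eq_lineMap_left x, lift_eq_lineMap_left a, lift_eq_lineMap_left b, ← image_segment]
  exact mem_image_of_mem _ hx

lemma lift_mem_segment_right [PartialOrder 𝕜] [IsOrderedRing 𝕜] (x : 𝕜) {a b y : 𝕜}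
    (hy : y ∈ segment 𝕜 a b) :
    (![x, y, x * y] : Fin 3 → 𝕜) ∈ segment 𝕜 ![x, a, x * a] ![x, b, x * b] := by
  rw [lift_eq_lineMap_right x y, lift_eq_lineMap_right x a, lift_eq_lineMap_right x b,
    ← image_segment]
  exact mem_image_of_mem _ hy

end

theorem bilinear_extreme_point_representation_general
    (lx ux ly uy x y : ℝ)
    (hx : x ∈ Set.Icc lx ux) (hy : y ∈ Set.Icc ly uy) :
    (![x, y, x * y] : Fin 3 → ℝ) ∈
      convexHull ℝ {p : Fin 3 → ℝ | ∃ vx vy : ℝ,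
        (vx = lx ∨ vx = ux) ∧ (vy = ly ∨ vy = uy) ∧
        p = ![vx, vy, vx * vy]} := by
  set S : Set (Fin 3 → ℝ) := {p | ∃ vx vy : ℝ,
    (vx = lx ∨ vx = ux) ∧ (vy = ly ∨ vy = uy) ∧ p = ![vx, vy, vx * vy]}
  have vertex_mem {vx vy : ℝ} (hvx : vx = lx ∨ vx = ux) (hvy : vy = ly ∨ vy = uy) :
      (![vx, vy, vx * vy] : Fin 3 → ℝ) ∈ S :=
    ⟨vx, vy, hvx, hvy, rfl⟩
  have edge_mem {vx : ℝ} (hvx : vx = lx ∨ vx = ux) :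
      (![vx, y, vx * y] : Fin 3 → ℝ) ∈ convexHull ℝ S :=
    segment_subset_convexHull (vertex_mem hvx (.inl rfl)) (vertex_mem hvx (.inr rfl))
      (lift_mem_segment_right vx (Icc_subset_segment hy))
  exact (convex_convexHull ℝ S).segment_subset (edge_mem (.inl rfl)) (edge_mem (.inr rfl))
    (lift_mem_segment_left (Icc_subset_segment hx) y)

/-- The lifted point `(x, y, xy)` of a bilinear term on a box lies in the
convex hull of the four lifted vertices of the box (McCormick hull). -/
theorem bilinear_extreme_point_representation
    (lx ux ly uy x y : ℝ)
    (hx' : lx ≤ ux) (hy' : ly ≤ uy)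
    (hx : x ∈ Set.Icc lx ux) (hy : y ∈ Set.Icc ly uy) :
    (![x, y, x * y] : Fin 3 → ℝ) ∈
      convexHull ℝ {p : Fin 3 → ℝ | ∃ vx vy : ℝ,
        (vx = lx ∨ vx = ux) ∧ (vy = ly ∨ vy = uy) ∧
        p = ![vx, vy, vx * vy]} :=
  bilinear_extreme_point_representation_general lx ux ly uy x y hx hy
end

section
/- For i = 1, 2, 3 let mᵢ : {0,1,2} → ℝ with mᵢ(0) ≤ mᵢ(1) ≤ mᵢ(2). Let λ : {0,1,2}³ → ℝ be nonnegative with total sum 1, and for each i let zᵢ₁, zᵢ₂ ∈ {0,1} with zᵢ₁ + zᵢ₂ = 1, zᵢ₁ ≥ Σ{λ(g) : gᵢ = 0} and zᵢ₂ ≥ Σ{λ(g) : gᵢ = 2}. Set xᵢ = Σ_g λ(g)·mᵢ(gᵢ) and x̂ = Σ_g λ(g)·m₁(g₁)m₂(g₂)m₃(g₃). Then there exists s ∈ {0,1}³ such that (x₁, x₂, x₃, x̂) lies in the convex hull in ℝ⁴ of the eight lifted points {(m₁(g₁), m₂(g₂), m₃(g₃), m₁(g₁)m₂(g₂)m₃(g₃))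 : gᵢ ∈ {sᵢ, sᵢ+1}}; i.e., every feasible point of the piecewise trilinear λ-formulation lies in the union over the 8 subboxes of the convex hulls of their lifted vertices. -/
/-!
The adjacency constraints with binary `zᵢ₁ + zᵢ₂ = 1` switch off one end of each axis: if
`zᵢ₂ = 0` every active multiplier has `gᵢ ≠ 2`, and if `zᵢ₁ = 0` every active multiplier has
`gᵢ ≠ 0`. So all the weight of `λ` sits on the vertices of a single subbox, and the represented
point, being a convex combination of those lifted vertices, lies in their convex hull.
-/

open Finset

theorem sum_smul_mem_convexHull_of_support {𝕜 E ι : Type*} [Field 𝕜] [LinearOrder 𝕜]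
    [IsStrictOrderedRing 𝕜] [AddCommGroup E] [Module 𝕜 E] [Fintype ι]
    {w : ι → 𝕜} {v : ι → E} {P : ι → Prop}
    (hw₀ : ∀ i, 0 ≤ w i) (hw₁ : ∑ i, w i = 1) (hP : ∀ i, w i ≠ 0 → P i) :
    ∑ i, w i • v i ∈ convexHull 𝕜 (v '' {i | P i}) := by
  classical
  have hsupp : ∀ i ∈ univ, i ∉ univ.filter P → w i = 0 := fun i _ hi =>
    not_not.mp fun h => hi (mem_filter.mpr ⟨mem_univ i, hP i h⟩)
  rw [← sum_subset (filter_subset P univ) fun i hi hi' => by rw [hsupp i hi hi', zero_smul]]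
  refine (convex_convexHull 𝕜 _).sum_mem (fun i _ => hw₀ i) ?_ fun i hi =>
    subset_convexHull 𝕜 _ ⟨i, (mem_filter.mp hi).2, rfl⟩
  rwa [sum_subset (filter_subset P univ) hsupp]

theorem eq_zero_of_sum_filter_le_zero {𝕜 ι : Type*} [AddCommMonoid 𝕜] [PartialOrder 𝕜]
    [IsOrderedAddMonoid 𝕜] [Fintype ι] {w : ι → 𝕜} {Q : ι → Prop} [DecidablePred Q]
    (hw : ∀ i, 0 ≤ w i) (h : ∑ i ∈ univ.filter Q, w i ≤ 0) {i : ι} (hi : Q i) : w i = 0 :=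
  (sum_eq_zero_iff_of_nonneg fun j _ => hw j).mp (h.antisymm (sum_nonneg fun j _ => hw j)) i
    (mem_filter.mpr ⟨mem_univ i, hi⟩)

theorem exists_segment_of_adjacency {ι : Type*} [Fintype ι] {w : ι → ℝ} {c : ι → Fin 3}
    {a b : ℝ} (hw : ∀ j, 0 ≤ w j) (ha : a = 0 ∨ a = 1) (hab : a + b = 1)
    (h₀ : ∑ j ∈ univ.filter (fun j => c j = 0), w j ≤ a)
    (h₂ : ∑ j ∈ univ.filter (fun j => c j = 2), w j ≤ b) :
    ∃ s : Fin 2, ∀ j, w j ≠ 0 → (c j : ℕ) = s ∨ (c j : ℕ) = s + 1 := by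
  rcases ha with rfl | rfl
  · refine ⟨1, fun j hj => ?_⟩
    have : c j ≠ 0 := fun hc => hj (eq_zero_of_sum_filter_le_zero hw h₀ hc)
    omega
  · obtain rfl : b = 0 := by linarith
    refine ⟨0, fun j hj => ?_⟩
    have : c j ≠ 2 := fun hc => hj (eq_zero_of_sum_filter_le_zero hw h₂ hc)
    omega

def liftedVertex (m : Fin 3 → Fin 3 → ℝ) (g : Fin 3 → Fin 3) : Fin 4 → ℝ :=
  ![m 0 (g 0), m 1 (g 1), m 2 (g 2), m 0 (g 0) * m 1 (g 1) * m 2 (g 2)]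

theorem sum_smul_liftedVertex (m : Fin 3 → Fin 3 → ℝ) (lam : (Fin 3 → Fin 3) → ℝ) :
    ∑ g, lam g • liftedVertex m g =
      ![∑ g, lam g * m 0 (g 0), ∑ g, lam g * m 1 (g 1), ∑ g, lam g * m 2 (g 2),
        ∑ g, lam g * (m 0 (g 0) * m 1 (g 1) * m 2 (g 2))] := by
  funext k
  fin_cases k <;> simp [Finset.sum_apply, liftedVertex]

theorem piecewise_trilinear_in_union_of_hulls_general
    (m : Fin 3 → Fin 3 → ℝ)
    (lam : (Fin 3 → Fin 3) → ℝ)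
    (hlam : ∀ g, 0 ≤ lam g)
    (hsum : ∑ g : Fin 3 → Fin 3, lam g = 1)
    (z1 z2 : Fin 3 → ℝ)
    (hz1 : ∀ i, z1 i = 0 ∨ z1 i = 1)
    (hzsum : ∀ i, z1 i + z2 i = 1)
    (hadj1 : ∀ i, ∑ g ∈ Finset.univ.filter (fun g : Fin 3 → Fin 3 => g i = 0), lam g ≤ z1 i)
    (hadj2 : ∀ i, ∑ g ∈ Finset.univ.filter (fun g : Fin 3 → Fin 3 => g i = 2), lam g ≤ z2 i)
    (x : Fin 3 → ℝ) (xhat : ℝ)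
    (hx : ∀ i, x i = ∑ g : Fin 3 → Fin 3, lam g * m i (g i))
    (hxhat : xhat = ∑ g : Fin 3 → Fin 3, lam g * (m 0 (g 0) * m 1 (g 1) * m 2 (g 2))) :
    ∃ s : Fin 3 → Fin 2,
      (![x 0, x 1, x 2, xhat] : Fin 4 → ℝ) ∈
        convexHull ℝ {p : Fin 4 → ℝ | ∃ g : Fin 3 → Fin 3,
          (∀ i, (g i : ℕ) = (s i : ℕ) ∨ (g i : ℕ) = (s i : ℕ) + 1) ∧
          p = ![m 0 (g 0), m 1 (g 1), m 2 (g 2),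
                m 0 (g 0) * m 1 (g 1) * m 2 (g 2)]} := by
  choose s hs using fun i =>
    exists_segment_of_adjacency hlam (hz1 i) (hzsum i) (hadj1 i) (hadj2 i)
  refine ⟨s, ?_⟩
  rw [hx 0, hx 1, hx 2, hxhat, ← sum_smul_liftedVertex]
  refine convexHull_mono ?_ (sum_smul_mem_convexHull_of_support hlam hsum
    (P := fun g => ∀ i, (g i : ℕ) = s i ∨ (g i : ℕ) = s i + 1) fun g hg i => hs i g hg)
  rintro _ ⟨g, hg, rfl⟩
  exact ⟨g, hg, rfl⟩

/-- Every feasible point of the piecewise trilinear λ-formulation lies in the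
union, over the 8 subboxes, of the convex hulls of their lifted vertices. -/
theorem piecewise_trilinear_in_union_of_hulls
    (m : Fin 3 → Fin 3 → ℝ)
    (hm : ∀ i : Fin 3, m i 0 ≤ m i 1 ∧ m i 1 ≤ m i 2)
    (lam : (Fin 3 → Fin 3) → ℝ)
    (hlam : ∀ g, 0 ≤ lam g)
    (hsum : ∑ g : Fin 3 → Fin 3, lam g = 1)
    (z1 z2 : Fin 3 → ℝ)
    (hz1 : ∀ i, z1 i = 0 ∨ z1 i = 1) (hz2 : ∀ i, z2 i = 0 ∨ z2 i = 1)
    (hzsum : ∀ i, z1 i + z2 i = 1)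
    (hadj1 : ∀ i, ∑ g ∈ Finset.univ.filter (fun g : Fin 3 → Fin 3 => g i = 0), lam g ≤ z1 i)
    (hadj2 : ∀ i, ∑ g ∈ Finset.univ.filter (fun g : Fin 3 → Fin 3 => g i = 2), lam g ≤ z2 i)
    (x : Fin 3 → ℝ) (xhat : ℝ)
    (hx : ∀ i, x i = ∑ g : Fin 3 → Fin 3, lam g * m i (g i))
    (hxhat : xhat = ∑ g : Fin 3 → Fin 3, lam g * (m 0 (g 0) * m 1 (g 1) * m 2 (g 2))) :
    ∃ s : Fin 3 → Fin 2,
      (![x 0, x 1, x 2, xhat] : Fin 4 → ℝ) ∈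
        convexHull ℝ {p : Fin 4 → ℝ | ∃ g : Fin 3 → Fin 3,
          (∀ i, (g i : ℕ) = (s i : ℕ) ∨ (g i : ℕ) = (s i : ℕ) + 1) ∧
          p = ![m 0 (g 0), m 1 (g 1), m 2 (g 2),
                m 0 (g 0) * m 1 (g 1) * m 2 (g 2)]} :=
  piecewise_trilinear_in_union_of_hulls_general m lam hlam hsum z1 z2 hz1 hzsum hadj1 hadj2 x xhat
    hx hxhat
end

section
/- For i = 1, 2, 3 let mᵢ : {0,1,2} → ℝ with mᵢ(0) ≤ mᵢ(1) ≤ mᵢ(2), and let (x₁, x₂, x₃) satisfy mᵢ(0) ≤ xᵢ ≤ mᵢ(2) for each i. Then there exist nonnegative λ : {0,1,2}³ → ℝ with total sum 1 and, for each i, zᵢ₁, zᵢ₂ ∈ {0,1} with zᵢ₁ + zᵢ₂ = 1, zᵢ₁ ≥ Σ{λ(g) : gᵢ = 0}, zᵢ₂ ≥ Σ{λ(g) : gᵢ = 2}, such that xᵢ = Σ_g λ(g)·mᵢ(gᵢ) for each i and x₁x₂x₃ = Σ_g λ(g)·m₁(g₁)m₂(g₂)m₃(g₃); i.e., the graph of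 the trilinear function over the partitioned box is contained in the feasible set of the piecewise trilinear λ-formulation, so the formulation is a valid relaxation. -/
/-!
Each coordinate `xᵢ` is a convex combination of two adjacent breakpoints, so it has weights
`wᵢ : Fin 3 → ℝ` with `wᵢ 0 = 0` or `wᵢ 2 = 0`. The product weights `λ g = ∏ᵢ wᵢ (gᵢ)` have
the `wᵢ` as marginals, which gives the coordinate and adjacency constraints (with `zᵢ₁ = 1`
exactly when `wᵢ 2 = 0`), and expanding the product of sums gives
`∑ g, λ g * ∏ᵢ mᵢ (gᵢ) = ∏ᵢ ∑ j, wᵢ j * mᵢ j = x₀ x₁ x₂`.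
-/

open Finset

lemma exists_adjacent_weights_of_mem_Icc {m : Fin 3 → ℝ} (hm : m 0 ≤ m 1 ∧ m 1 ≤ m 2) {x : ℝ}
    (hx : m 0 ≤ x ∧ x ≤ m 2) :
    ∃ w : Fin 3 → ℝ, (∀ j, 0 ≤ w j) ∧ ∑ j, w j = 1 ∧ ∑ j, w j * m j = x ∧
      (w 0 = 0 ∨ w 2 = 0) := by
  rcases le_total x (m 1) with hx1 | hx1
  · obtain ⟨a, b, ha, hb, hab, rfl⟩ : x ∈ segment ℝ (m 0) (m 1) := by
      rw [segment_eq_Icc hm.1]; exact ⟨hx.1, hx1⟩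
    refine ⟨![a, b, 0], ?_, ?_, ?_, Or.inr rfl⟩
    · intro j; fin_cases j <;> simp [ha, hb]
    · simp [Fin.sum_univ_three, hab]
    · simp [Fin.sum_univ_three]
  · obtain ⟨a, b, ha, hb, hab, rfl⟩ : x ∈ segment ℝ (m 1) (m 2) := by
      rw [segment_eq_Icc hm.2]; exact ⟨hx1, hx.2⟩
    refine ⟨![0, a, b], ?_, ?_, ?_, Or.inl rfl⟩
    · intro j; fin_cases j <;> simp [ha, hb]
    · simp [Fin.sum_univ_three, hab]
    · simp [Fin.sum_univ_three]

section ProductWeights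

variable {ι κ R : Type*} [Fintype ι] [DecidableEq ι] [Fintype κ] [CommSemiring R]
  (w : ι → κ → R)

lemma sum_prod_mul_prod (f : ι → κ → R) :
    ∑ g : ι → κ, (∏ k, w k (g k)) * ∏ k, f k (g k) = ∏ k, ∑ j, w k j * f k j := by
  simp_rw [← prod_mul_distrib]
  exact (Fintype.prod_sum fun k j => w k j * f k j).symm

lemma sum_prod_mul_apply (hw : ∀ k, ∑ j, w k j = 1) (i : ι) (h : κ → R) :
    ∑ g : ι → κ, (∏ k, w k (g k)) * h (g i) = ∑ j, w i j * h j := by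
  have key := sum_prod_mul_prod w fun k j => if k = i then h j else 1
  simpa [apply_ite, hw] using key

lemma sum_filter_apply_eq_prod [DecidableEq κ] (hw : ∀ k, ∑ j, w k j = 1) (i : ι) (j : κ) :
    ∑ g ∈ univ.filter (fun g : ι → κ => g i = j), ∏ k, w k (g k) = w i j := by
  simpa [sum_filter] using sum_prod_mul_apply w hw i fun l => if l = j then 1 else 0

end ProductWeights

/-- The graph of the trilinear function over the partitioned box is contained
in the feasible set of the piecewise trilinear λ-formulation. -/
theorem trilinear_graph_in_lambda_formulation
    (m : Fin 3 → Fin 3 → ℝ)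
    (hm : ∀ i : Fin 3, m i 0 ≤ m i 1 ∧ m i 1 ≤ m i 2)
    (x : Fin 3 → ℝ)
    (hx : ∀ i, m i 0 ≤ x i ∧ x i ≤ m i 2) :
    ∃ (lam : (Fin 3 → Fin 3) → ℝ) (z1 z2 : Fin 3 → ℝ),
      (∀ g, 0 ≤ lam g) ∧
      (∑ g : Fin 3 → Fin 3, lam g = 1) ∧
      (∀ i, z1 i = 0 ∨ z1 i = 1) ∧ (∀ i, z2 i = 0 ∨ z2 i = 1) ∧
      (∀ i, z1 i + z2 i = 1) ∧
      (∀ i, ∑ g ∈ Finset.univ.filter (fun g : Fin 3 → Fin 3 => g i = 0), lam g ≤ z1 i) ∧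
      (∀ i, ∑ g ∈ Finset.univ.filter (fun g : Fin 3 → Fin 3 => g i = 2), lam g ≤ z2 i) ∧
      (∀ i, x i = ∑ g : Fin 3 → Fin 3, lam g * m i (g i)) ∧
      x 0 * x 1 * x 2 =
        ∑ g : Fin 3 → Fin 3, lam g * (m 0 (g 0) * m 1 (g 1) * m 2 (g 2)) := by
  choose w hw0 hw1 hwx hwend using fun i => exists_adjacent_weights_of_mem_Icc (hm i) (hx i)
  have hmarg := sum_prod_mul_apply w hw1
  have hw_le_one : ∀ i j, w i j ≤ 1 := fun i j =>
    hw1 i ▸ single_le_sum (fun j _ => hw0 i j) (mem_univ j)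
  refine ⟨fun g => ∏ k, w k (g k), fun i => if w i 2 = 0 then 1 else 0,
    fun i => if w i 2 = 0 then 0 else 1, fun g => prod_nonneg fun k _ => hw0 k (g k),
    by simpa [hw1] using hmarg 0 fun _ => 1, ?_, ?_, ?_, fun i => ?_, fun i => ?_,
    fun i => ((hmarg i (m i)).trans (hwx i)).symm, ?_⟩
  iterate 3 intro i; dsimp only; split_ifs <;> norm_num
  · rw [sum_filter_apply_eq_prod w hw1]
    dsimp only
    split_ifs with h
    exacts [hw_le_one i 0, ((hwend i).resolve_right h).le]
  · rw [sum_filter_apply_eq_prod w hw1]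
    dsimp only
    split_ifs with h
    exacts [h.le, hw_le_one i 2]
  · calc x 0 * x 1 * x 2 = ∏ i, ∑ j, w i j * m i j := by simp [Fin.prod_univ_three, hwx]
      _ = ∑ g : Fin 3 → Fin 3, (∏ k, w k (g k)) * ∏ k, m k (g k) := (sum_prod_mul_prod w m).symm
      _ = _ := by simp [Fin.prod_univ_three, mul_assoc]
end
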